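/- arXiv:2005.04499 — 7 statements merged into one kernel-verified Lean document; each statement's English description precedes it below -/
import Mathlib

section
/- Let λ > 0, w₀ > 0, d > 0 and θ ∈ [0, π/2). If w̃₀ > 0 satisfies w(d, w̃₀) = w(d, w₀)/cos θ, then for every y ∈ ℝ one has cos θ · I_G(y·cos θ; d, w₀) = I_G(y; d, w̃₀). That is, the power density distribution across a flat surface hit by a Gaussian beam under incidence angle θ equals the power density of an orthogonally incident Gaussian beam emitted from the same distance d but with beam waist radius w̃₀. -/
open Real

/-! `I_G` depends on the waist radius only through the beamwidth, and squeezing a Gaussian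
profile of width `w` by the factor `cos θ` while scaling its height by `cos θ` yields the
profile of width `w / cos θ`. -/

/-- Beamwidth of a Gaussian beam with wavelength `lam` and waist radius `w0`
at propagation distance `z`: `w(z, w₀) = w₀ √(1 + (λ z/(π w₀²))²)`. -/
noncomputable def beamWidth (lam w0 z : ℝ) : ℝ :=
  w0 * Real.sqrt (1 + (lam * z / (π * w0 ^ 2)) ^ 2)

/-- 2D orthogonal Gaussian power density at radial distance `a`, propagation distance `z`. -/
noncomputable def IG (lam a z w0 : ℝ) : ℝ :=
  (Real.sqrt 2 / (Real.sqrt π * beamWidth lam w0 z)) *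
    Real.exp (-2 * a ^ 2 / (beamWidth lam w0 z) ^ 2)

noncomputable def gaussianProfile (w a : ℝ) : ℝ :=
  Real.sqrt 2 / (Real.sqrt π * w) * Real.exp (-2 * a ^ 2 / w ^ 2)

theorem IG_eq_gaussianProfile (lam a z w0 : ℝ) :
    IG lam a z w0 = gaussianProfile (beamWidth lam w0 z) a :=
  rfl

theorem mul_gaussianProfile_mul (c w a : ℝ) :
    c * gaussianProfile w (a * c) = gaussianProfile (w / c) a := by
  have amplitude :
      c * (Real.sqrt 2 / (Real.sqrt π * w)) = Real.sqrt 2 / (Real.sqrt π * (w / c)) := by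
    simp only [div_eq_mul_inv, mul_inv, inv_inv]
    ring
  have exponent : -2 * (a * c) ^ 2 / w ^ 2 = -2 * a ^ 2 / (w / c) ^ 2 := by
    simp only [div_eq_mul_inv, mul_inv, inv_inv, mul_pow, inv_pow]
    ring
  rw [gaussianProfile, gaussianProfile, ← mul_assoc, amplitude, exponent]

theorem gaussian_oblique_density_eq_orthogonal_general (lam w0 d θ tw0 : ℝ)
    (hEq : beamWidth lam tw0 d = beamWidth lam w0 d / Real.cos θ) :
    ∀ y : ℝ, Real.cos θ * IG lam (y * Real.cos θ) d w0 = IG lam y d tw0 := by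
  intro y
  rw [IG_eq_gaussianProfile, IG_eq_gaussianProfile, hEq, mul_gaussianProfile_mul]

/-- Lemma 1 (2D): the power density across a surface hit under incidence angle θ equals that
of an orthogonally incident Gaussian beam from the same distance with waist radius w̃₀
satisfying `w(d, w̃₀) = w(d, w₀)/cos θ`. -/
theorem gaussian_oblique_density_eq_orthogonal (lam w0 d θ tw0 : ℝ)
    (hlam : 0 < lam) (hw0 : 0 < w0) (hd : 0 < d)
    (hθ : θ ∈ Set.Ico 0 (π / 2)) (htw0 : 0 < tw0)
    (hEq : beamWidth lam tw0 d = beamWidth lam w0 d / Real.cos θ) :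
    ∀ y : ℝ, Real.cos θ * IG lam (y * Real.cos θ) d w0 = IG lam y d tw0 :=
  gaussian_oblique_density_eq_orthogonal_general lam w0 d θ tw0 hEq
end

section
/- Let λ > 0, w₀ > 0, d > 0 and θ ∈ [0, π/2), and set c := cos θ ∈ (0, 1]. Then the discriminant (w₀²/c² + λ²d²/(π²c²w₀²))² − 4λ²d²/π² is nonnegative, and the number w̃₀ > 0 defined by w̃₀² = (1/2)[ w₀²/c² + λ²d²/(π²c²w₀²) + ((w₀²/c² + λ²d²/(π²c²w₀²))² − 4λ²d²/π²)^{1/2} ] is positive and satisfies w(d, w̃₀) = w(d, w₀)/c. -/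
open Real

/-- Eq. (9): closed form of the equivalent waist radius w̃₀ in Lemma 1: the discriminant is
nonnegative, w̃₀ is positive, and `w(d, w̃₀) = w(d, w₀)/cos θ`. -/
theorem equivalent_waist_radius_closed_form (lam w0 d θ : ℝ)
    (hlam : 0 < lam) (hw0 : 0 < w0) (hd : 0 < d) (hθ : θ ∈ Set.Ico 0 (π / 2)) :
    0 ≤ (w0 ^ 2 / Real.cos θ ^ 2 + lam ^ 2 * d ^ 2 / (π ^ 2 * Real.cos θ ^ 2 * w0 ^ 2)) ^ 2
        - 4 * lam ^ 2 * d ^ 2 / π ^ 2 ∧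
    0 < Real.sqrt ((1 / 2) *
        (w0 ^ 2 / Real.cos θ ^ 2 + lam ^ 2 * d ^ 2 / (π ^ 2 * Real.cos θ ^ 2 * w0 ^ 2) +
          Real.sqrt ((w0 ^ 2 / Real.cos θ ^ 2
              + lam ^ 2 * d ^ 2 / (π ^ 2 * Real.cos θ ^ 2 * w0 ^ 2)) ^ 2
            - 4 * lam ^ 2 * d ^ 2 / π ^ 2))) ∧
    beamWidth lam
      (Real.sqrt ((1 / 2) *
        (w0 ^ 2 / Real.cos θ ^ 2 + lam ^ 2 * d ^ 2 / (π ^ 2 * Real.cos θ ^ 2 * w0 ^ 2) +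
          Real.sqrt ((w0 ^ 2 / Real.cos θ ^ 2
              + lam ^ 2 * d ^ 2 / (π ^ 2 * Real.cos θ ^ 2 * w0 ^ 2)) ^ 2
            - 4 * lam ^ 2 * d ^ 2 / π ^ 2)))) d
      = beamWidth lam w0 d / Real.cos θ := by
  obtain ⟨hθ0, hθ2⟩ := hθ
  have hπ : 0 < π := Real.pi_pos
  have hc : 0 < Real.cos θ := Real.cos_pos_of_mem_Ioo ⟨by linarith, hθ2⟩
  have hc1 : Real.cos θ ≤ 1 := Real.cos_le_one θ
  set c := Real.cos θ with hcdef
  set A : ℝ := w0 ^ 2 / c ^ 2 + lam ^ 2 * d ^ 2 / (π ^ 2 * c ^ 2 * w0 ^ 2) with hAdef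
  set D : ℝ := A ^ 2 - 4 * lam ^ 2 * d ^ 2 / π ^ 2 with hDdef
  have hA0 : 0 < A := by positivity
  have hc4 : c ^ 4 ≤ 1 := pow_le_one₀ hc.le hc1
  have hD : 0 ≤ D := by
    rw [hDdef, hAdef]
    set a : ℝ := w0 ^ 2 / c ^ 2 with hadef
    set b : ℝ := lam ^ 2 * d ^ 2 / (π ^ 2 * c ^ 2 * w0 ^ 2) with hbdef
    have hab : a * b = lam ^ 2 * d ^ 2 / (π ^ 2 * c ^ 4) := by
      rw [hadef, hbdef]; field_simp
    have h1 : lam ^ 2 * d ^ 2 / π ^ 2 ≤ lam ^ 2 * d ^ 2 / (π ^ 2 * c ^ 4) := by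
      apply div_le_div_of_nonneg_left (by positivity) (by positivity)
      nlinarith
    have h2 : 0 ≤ (a - b) ^ 2 := sq_nonneg _
    have h3 : (a + b) ^ 2 - 4 * lam ^ 2 * d ^ 2 / π ^ 2
        = (a - b) ^ 2 + 4 * (lam ^ 2 * d ^ 2 / (π ^ 2 * c ^ 4))
          - 4 * (lam ^ 2 * d ^ 2 / π ^ 2) := by
      linear_combination 4 * hab
    linarith
  have hsqD2 : Real.sqrt D ^ 2 = D := Real.sq_sqrt hD
  set s : ℝ := (1 / 2) * (A + Real.sqrt D) with hsdef
  have hs : 0 < s := by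
    rw [hsdef]
    have := Real.sqrt_nonneg D
    positivity
  have hkey : s ^ 2 + lam ^ 2 * d ^ 2 / π ^ 2 = A * s := by
    rw [hsdef, hDdef]
    linear_combination (1 / 4 : ℝ) * hsqD2
  refine ⟨hD, Real.sqrt_pos.mpr hs, ?_⟩
  have hWs : Real.sqrt s ^ 2 = s := Real.sq_sqrt hs.le
  have hL0 : 0 ≤ beamWidth lam (Real.sqrt s) d := by
    unfold beamWidth; positivity
  have hR0 : 0 ≤ beamWidth lam w0 d / c := by
    unfold beamWidth; positivity
  have hL2 : (beamWidth lam (Real.sqrt s) d) ^ 2 = A := by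
    unfold beamWidth
    rw [mul_pow, hWs, Real.sq_sqrt (by positivity : (0:ℝ) ≤ 1 + (lam * d / (π * s)) ^ 2)]
    have e1 : s * (1 + (lam * d / (π * s)) ^ 2) = (s ^ 2 + lam ^ 2 * d ^ 2 / π ^ 2) / s := by
      field_simp
    rw [e1, hkey, mul_div_assoc, div_self (ne_of_gt hs), mul_one]
  have hR2 : (beamWidth lam w0 d / c) ^ 2 = A := by
    unfold beamWidth
    rw [div_pow, mul_pow, Real.sq_sqrt (by positivity), hAdef]
    field_simp
  calc beamWidth lam (Real.sqrt s) d
      = Real.sqrt ((beamWidth lam (Real.sqrt s) d) ^ 2) := (Real.sqrt_sq hL0).symm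
    _ = Real.sqrt ((beamWidth lam w0 d / c) ^ 2) := by rw [hL2, hR2]
    _ = beamWidth lam w0 d / c := Real.sqrt_sq hR0
end

section
/- Let σ > 0, A₀ > 0, t > 0, w > 0, let U be a real random variable with law N(0, σ²), and define h_g := A₀·exp(−2U²/(t·w²)). Set ϖ := t·w²/(4σ²). Then the law of h_g is absolutely continuous with respect to Lebesgue measure with density f(x) = (√ϖ/(√π·A₀)) · (ln(A₀/x))^{−1/2} · (x/A₀)^{ϖ−1} for 0 < x < A₀, and f(x) = 0 otherwise. -/
/-!
The gain `h = A₀ exp(-k U²)`, `k = 2/(t w²)`, is an even function of `U`, so it is a function of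
`|U|`, whose law has density `2φ` on `(0, ∞)` (`φ` the `N(0, σ²)` density). On `(0, ∞)` the map
`u ↦ A₀ exp(-k u²)` is a decreasing bijection onto `(0, A₀)`, and the one-dimensional change of
variables gives `h` the density `2φ(u) / |h'(u)|` at `x = h(u)`; substituting
`u = √(ln(A₀/x) / k)` turns this into the stated formula, because `k ϖ = 1 / (2σ²)`.
-/

open Real MeasureTheory ProbabilityTheory Set
open scoped ENNReal NNReal

theorem lintegral_comp_abs (F : ℝ → ℝ≥0∞) : ∫⁻ x, F |x| = 2 * ∫⁻ x in Ioi 0, F x := by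
  have h_pos : ∫⁻ x in Ioi 0, F |x| = ∫⁻ x in Ioi 0, F x :=
    setLIntegral_congr_fun measurableSet_Ioi fun x hx => by rw [abs_of_pos hx]
  have h_neg : ∫⁻ x in Iic 0, F |x| = ∫⁻ x in Ioi 0, F x := by
    have := (Measure.measurePreserving_neg (volume : Measure ℝ)).setLIntegral_comp_preimage_emb
      (Homeomorph.neg ℝ).measurableEmbedding (fun x => F |x|) (Ici 0)
    simp only [neg_preimage, neg_Ici, neg_zero, abs_neg] at this
    rw [this, setLIntegral_congr Ioi_ae_eq_Ici.symm, h_pos]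
  rw [← lintegral_add_compl _ measurableSet_Ioi, compl_Ioi, h_pos, h_neg, two_mul]

theorem map_abs_withDensity_of_even {p : ℝ → ℝ≥0∞} (hp : ∀ x, p (-x) = p x) :
    Measure.map abs (volume.withDensity p)
      = (volume.restrict (Ioi 0)).withDensity (fun x => 2 * p x) := by
  ext B hB
  have h_abs : ∀ x, p |x| = p x := fun x => by
    rcases abs_choice x with h | h <;> rw [h]; exact hp x
  have h_ind : ∀ x, (abs ⁻¹' B).indicator p x = B.indicator p |x| := fun x => by
    by_cases hx : |x| ∈ B <;> simp [indicator, hx, h_abs]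
  rw [Measure.map_apply measurable_abs hB, withDensity_apply _ (measurable_abs hB),
    withDensity_apply _ hB, ← lintegral_indicator (measurable_abs hB), lintegral_congr h_ind,
    lintegral_comp_abs, lintegral_indicator hB, Measure.restrict_restrict hB,
    lintegral_const_mul' _ _ ENNReal.ofNat_ne_top]

theorem map_restrict_withDensity_of_injOn {s : Set ℝ} (hs : MeasurableSet s) {f f' : ℝ → ℝ}
    (hf : Measurable f) (hf' : ∀ x ∈ s, HasDerivWithinAt f (f' x) s x) (hinj : InjOn f s)
    {p q : ℝ → ℝ≥0∞} (hpq : ∀ x ∈ s, p x = ENNReal.ofReal |f' x| * q (f x))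
    (hq : ∀ y ∉ f '' s, q y = 0) :
    Measure.map f ((volume.restrict s).withDensity p) = volume.withDensity q := by
  ext B hB
  have h_supp : Function.support q ⊆ f '' s := fun y hy => by_contra fun h => hy (hq y h)
  rw [Measure.map_apply hf hB, withDensity_apply _ (hf hB), withDensity_apply _ hB,
    Measure.restrict_restrict (hf hB),
    setLIntegral_congr_fun ((hf hB).inter hs) fun x hx => hpq x hx.2,
    ← lintegral_image_eq_lintegral_abs_deriv_mul ((hf hB).inter hs)
      (fun x hx => (hf' x hx.2).mono inter_subset_right) (hinj.mono inter_subset_right),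
    image_preimage_inter, inter_comm, ← Measure.restrict_restrict' hB,
    setLIntegral_eq_of_support_subset h_supp]

/-- The paper's `h_g` as a function of the misalignment `u`, with `k = 2 / (t w²)`. -/
noncomputable def gml (A₀ k u : ℝ) : ℝ := A₀ * exp (-(k * u ^ 2))

noncomputable def gmlPDFReal (A₀ ϖ x : ℝ) : ℝ :=
  if 0 < x ∧ x < A₀ then
    (√ϖ / (√π * A₀)) * (log (A₀ / x)) ^ (-(1:ℝ) / 2) * (x / A₀) ^ (ϖ - 1)
  else 0

section

variable {A₀ k : ℝ}

theorem continuous_gml : Continuous (gml A₀ k) := by unfold gml; fun_prop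

theorem hasDerivAt_gml (u : ℝ) : HasDerivAt (gml A₀ k) (-(2 * k * u) * gml A₀ k u) u := by
  have h : HasDerivAt (fun x => -(k * x ^ 2)) (-(k * (2 * u))) u := by
    simpa using ((hasDerivAt_pow 2 u).const_mul k).fun_neg
  exact (h.exp.const_mul A₀).congr_deriv (by rw [gml]; ring)

theorem gml_div_self (hA₀ : A₀ ≠ 0) (u : ℝ) : gml A₀ k u / A₀ = exp (-(k * u ^ 2)) :=
  mul_div_cancel_left₀ _ hA₀

theorem log_div_gml (hA₀ : A₀ ≠ 0) (u : ℝ) : log (A₀ / gml A₀ k u) = k * u ^ 2 := by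
  rw [gml, div_mul_cancel_left₀ hA₀, log_inv, log_exp, neg_neg]

theorem gml_abs (u : ℝ) : gml A₀ k |u| = gml A₀ k u := by simp only [gml, sq_abs]

theorem strictAntiOn_gml (hA₀ : 0 < A₀) (hk : 0 < k) : StrictAntiOn (gml A₀ k) (Ici 0) := by
  intro a ha b _ hab
  have : a ^ 2 < b ^ 2 := by gcongr
  unfold gml
  gcongr

theorem image_gml_Ioi (hA₀ : 0 < A₀) (hk : 0 < k) : gml A₀ k '' Ioi 0 = Ioo 0 A₀ := by
  ext y
  constructor
  · rintro ⟨u, hu, rfl⟩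
    have h0 : gml A₀ k 0 = A₀ := by simp [gml]
    exact ⟨by unfold gml; positivity,
      (strictAntiOn_gml hA₀ hk (mem_Ici.2 le_rfl) (mem_Ici.2 hu.le) hu).trans_eq h0⟩
  · rintro ⟨hy0, hyA⟩
    have hlog : 0 < log (A₀ / y) := log_pos ((one_lt_div hy0).2 hyA)
    refine ⟨√(log (A₀ / y) / k), sqrt_pos.2 (div_pos hlog hk), ?_⟩
    rw [gml, sq_sqrt (div_pos hlog hk).le, mul_div_cancel₀ _ hk.ne', exp_neg,
      exp_log (div_pos hA₀ hy0), inv_div, mul_div_cancel₀ _ hA₀.ne']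

theorem gmlPDFReal_gml (hA₀ : 0 < A₀) (hk : 0 < k) (ϖ : ℝ) {u : ℝ} (hu : 0 < u) :
    gmlPDFReal A₀ ϖ (gml A₀ k u)
      = √ϖ / (√π * A₀) * (√k * u)⁻¹ * exp (-(k * u ^ 2) * (ϖ - 1)) := by
  have hmem : gml A₀ k u ∈ Ioo 0 A₀ := image_gml_Ioi hA₀ hk ▸ mem_image_of_mem _ hu
  rw [gmlPDFReal, if_pos (mem_Ioo.1 hmem), log_div_gml hA₀.ne', gml_div_self hA₀.ne',
    show (-(1:ℝ) / 2) = -(1 / 2) by norm_num, rpow_neg (by positivity), ← sqrt_eq_rpow,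
    sqrt_mul hk.le, sqrt_sq hu.le, ← exp_mul]

theorem abs_deriv_mul_gmlPDFReal (hA₀ : 0 < A₀) (hk : 0 < k) {ϖ : ℝ} {v : ℝ≥0}
    (hkϖv : 2 * k * ϖ * v = 1) {u : ℝ} (hu : 0 < u) :
    |-(2 * k * u) * gml A₀ k u| * gmlPDFReal A₀ ϖ (gml A₀ k u) = 2 * gaussianPDFReal 0 v u := by
  have hv : (v : ℝ) ≠ 0 := by rintro h; simp [h] at hkϖv
  have hϖ : 0 ≤ ϖ := by
    rw [eq_inv_of_mul_eq_one_left (by linear_combination hkϖv : ϖ * (2 * k * v) = 1)]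
    positivity
  have hroot : √k * √ϖ * √(2 * v) = 1 := by
    rw [← sqrt_mul hk.le, ← sqrt_mul (by positivity), ← sqrt_one]
    congr 1; linear_combination hkϖv
  have hexp : exp (-(k * u ^ 2)) * exp (-(k * u ^ 2) * (ϖ - 1))
      = exp (-(u - 0) ^ 2 / (2 * v)) := by
    rw [← exp_add]; congr 1; field_simp; linear_combination (-u ^ 2) * hkϖv
  have hderiv : -(2 * k * u) * gml A₀ k u ≤ 0 :=
    mul_nonpos_of_nonpos_of_nonneg (by nlinarith) (by unfold gml; positivity)
  rw [gmlPDFReal_gml hA₀ hk ϖ hu, abs_of_nonpos hderiv, gaussianPDFReal,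
    show 2 * π * v = π * (2 * v) by ring, sqrt_mul pi_pos.le, ← hexp, gml]
  field_simp
  linear_combination √k * hroot - √ϖ * √(2 * v) * mul_self_sqrt hk.le

theorem map_gml_gaussianReal (hA₀ : 0 < A₀) (hk : 0 < k) {ϖ : ℝ} {v : ℝ≥0}
    (hkϖv : 2 * k * ϖ * v = 1) :
    (gaussianReal 0 v).map (gml A₀ k)
      = volume.withDensity fun x => ENNReal.ofReal (gmlPDFReal A₀ ϖ x) := by
  have hv : v ≠ 0 := by rintro rfl; simp at hkϖv
  have h_even : ∀ u, gaussianPDF 0 v (-u) = gaussianPDF 0 v u := fun u => by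
    simp [gaussianPDF, gaussianPDFReal]
  have h_fold :
      (gaussianReal 0 v).map (gml A₀ k) = ((gaussianReal 0 v).map abs).map (gml A₀ k) := by
    rw [Measure.map_map continuous_gml.measurable measurable_abs]
    exact congrArg (Measure.map · _) (funext fun u => (gml_abs u).symm)
  rw [h_fold, gaussianReal_of_var_ne_zero 0 hv, map_abs_withDensity_of_even h_even]
  refine map_restrict_withDensity_of_injOn measurableSet_Ioi continuous_gml.measurable
    (fun u _ => (hasDerivAt_gml u).hasDerivWithinAt)
    ((strictAntiOn_gml hA₀ hk).injOn.mono Ioi_subset_Ici_self) (fun u hu => ?_) (fun y hy => ?_)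
  · rw [← ENNReal.ofReal_mul (abs_nonneg _), abs_deriv_mul_gmlPDFReal hA₀ hk hkϖv hu,
      ENNReal.ofReal_mul zero_le_two, ENNReal.ofReal_ofNat, gaussianPDF]
  · rw [image_gml_Ioi hA₀ hk] at hy
    rw [gmlPDFReal, if_neg (mt mem_Ioo.2 hy), ENNReal.ofReal_zero]

end

theorem GML_pdf_2D_general {α : Type*} [MeasurableSpace α]
    (P : Measure α)
    (σ A₀ t w : ℝ) (hσ : 0 < σ) (hA₀ : 0 < A₀) (ht : 0 < t) (hw : 0 < w)
    (U : α → ℝ) (hU : Measurable U)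
    (hlaw : Measure.map U P = gaussianReal 0 (σ ^ 2).toNNReal)
    (ϖ : ℝ) (hϖ : ϖ = t * w ^ 2 / (4 * σ ^ 2)) :
    Measure.map (fun ω => A₀ * Real.exp (-2 * (U ω) ^ 2 / (t * w ^ 2))) P
      = volume.withDensity (fun x => ENNReal.ofReal (
          if 0 < x ∧ x < A₀ then
            (Real.sqrt ϖ / (Real.sqrt π * A₀)) * (Real.log (A₀ / x)) ^ (-(1:ℝ) / 2)
              * (x / A₀) ^ (ϖ - 1)
          else 0)) := by
  set k := 2 / (t * w ^ 2) with hk_def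
  have hk : 0 < k := by positivity
  have hkϖv : 2 * k * ϖ * (σ ^ 2).toNNReal = 1 := by
    rw [Real.coe_toNNReal _ (sq_nonneg σ), hk_def, hϖ]
    field_simp
    ring
  have h_gml : (fun ω => A₀ * exp (-2 * U ω ^ 2 / (t * w ^ 2))) = gml A₀ k ∘ U := by
    funext ω
    simp only [Function.comp_apply, gml, hk_def]
    ring_nf
  rw [h_gml, ← Measure.map_map continuous_gml.measurable hU, hlaw]
  exact map_gml_gaussianReal hA₀ hk hkϖv

/-- Proposition 2: the PDF of the GML `h_g = A₀ exp(−2U²/(t w²))` for Gaussian misalignment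
`U ~ N(0, σ²)`:  with `ϖ = t w²/(4σ²)`, the density is
`(√ϖ/(√π A₀)) (ln(A₀/x))^{−1/2} (x/A₀)^{ϖ−1}` on `(0, A₀)` and `0` otherwise. -/
theorem GML_pdf_2D {α : Type*} [MeasurableSpace α]
    (P : Measure α) [IsProbabilityMeasure P]
    (σ A₀ t w : ℝ) (hσ : 0 < σ) (hA₀ : 0 < A₀) (ht : 0 < t) (hw : 0 < w)
    (U : α → ℝ) (hU : Measurable U)
    (hlaw : Measure.map U P = gaussianReal 0 (σ ^ 2).toNNReal)
    (ϖ : ℝ) (hϖ : ϖ = t * w ^ 2 / (4 * σ ^ 2)) :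
    Measure.map (fun ω => A₀ * Real.exp (-2 * (U ω) ^ 2 / (t * w ^ 2))) P
      = volume.withDensity (fun x => ENNReal.ofReal (
          if 0 < x ∧ x < A₀ then
            (Real.sqrt ϖ / (Real.sqrt π * A₀)) * (Real.log (A₀ / x)) ^ (-(1:ℝ) / 2)
              * (x / A₀) ^ (ϖ - 1)
          else 0)) :=
  GML_pdf_2D_general P σ A₀ t w hσ hA₀ ht hw U hU hlaw ϖ hϖ
end

section
/- Let θ_i, θ̂ ∈ [0, π/2), φ̂ ∈ ℝ and w > 0. Define the 2×2 real matrix A := T_{θ̂}^{-1} · R_{φ̂}ᵀ · ((1/w²)·T_{θ_i}²) · R_{φ̂} · T_{θ̂}^{-1}. Then: (i) A is symmetric and positive definite with det A = cos²θ_i/(w⁴·cos²θ̂); and (ii) for every orthogonal 2×2 matrix Q and every λ₁, λ₂ > 0 with A = Qᵀ·diag(λ₁, λ₂)·Q, one has for all a ∈ ℝ²: cos θ̂ · √(λ₁λ₂) · exp( −2·(T_{θ̂} R_{−φ̂} a)ᵀ · Qᵀ diag(λ₁, λ₂) Q · (T_{θ̂} R_{−φ̂} a) ) = (cos θ_i/w²)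 · exp( −(2/w²)·aᵀ T_{θ_i}² a ). That is, a general astigmatic Gaussian beam with incidence angles (θ̂, φ̂), waist radii chosen so that 1/w(d, ŵ_{0,i})² = λ_i, and footprint rotation given by the eigenvectors of A produces across the surface exactly the same power density as the original Gaussian beam with incidence elevation angle θ_i. -/
open Real Matrix

/-- Counter-clockwise rotation matrix `R_τ`. -/
noncomputable def Rot (τ : ℝ) : Matrix (Fin 2) (Fin 2) ℝ :=
  !![Real.cos τ, -Real.sin τ; Real.sin τ, Real.cos τ]

/-- Transformation matrix `T_τ = diag(cos τ, 1)`. -/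
noncomputable def Tm (τ : ℝ) : Matrix (Fin 2) (Fin 2) ℝ :=
  !![Real.cos τ, 0; 0, 1]

/-!
With `S = R_{φ̂} T_{θ̂}⁻¹`, the matrix `A` is the congruence `Sᵀ D S` of the diagonal matrix
`D = (1/w²) T_{θᵢ}²`, and `T_{θ̂} R_{−φ̂} = S⁻¹`. Hence `A` is positive definite with
`det A = det D / cos²θ̂`. In the astigmatic density the substitution `b = S⁻¹ a` turns the
exponent `bᵀ A b` back into `aᵀ D a`, and `√(λ₁λ₂) = √(det A) = cos θᵢ / (w² cos θ̂)` turns the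
prefactor into `cos θᵢ / w²`.
-/

section Conjugation

variable {n R : Type*} [Fintype n]

theorem dotProduct_mulVec_conj [CommSemiring R] (B N : Matrix n n R) (x : n → R) :
    B *ᵥ x ⬝ᵥ N *ᵥ (B *ᵥ x) = x ⬝ᵥ (Bᵀ * N * B) *ᵥ x := by
  rw [← mulVec_mulVec, ← mulVec_mulVec, dotProduct_mulVec x, vecMul_transpose]

theorem transpose_conj_cancel_of_mul_eq_one [CommSemiring R] [DecidableEq n] {S B : Matrix n n R}
    (h : S * B = 1) (D : Matrix n n R) : Bᵀ * (Sᵀ * D * S) * B = D := by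
  have hT : Bᵀ * Sᵀ = 1 := by rw [← transpose_mul, h, transpose_one]
  simp only [← Matrix.mul_assoc, hT, Matrix.one_mul]
  rw [Matrix.mul_assoc, h, Matrix.mul_one]

theorem det_transpose_mul_diagonal_mul [CommRing R] [DecidableEq n] {Q : Matrix n n R}
    (hQ : Qᵀ * Q = 1) (d : n → R) : (Qᵀ * diagonal d * Q).det = ∏ i, d i := by
  rw [det_mul, det_mul, mul_comm Qᵀ.det, mul_assoc, ← det_mul, hQ, det_one, mul_one,
    det_diagonal]

end Conjugation

theorem Tm_eq_diagonal (τ : ℝ) : Tm τ = diagonal ![cos τ, 1] := by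
  ext i j; fin_cases i <;> fin_cases j <;> simp [Tm]

theorem Tm_transpose (τ : ℝ) : (Tm τ)ᵀ = Tm τ := by
  rw [Tm_eq_diagonal, diagonal_transpose]

theorem det_Tm (τ : ℝ) : (Tm τ).det = cos τ := by
  simp [Tm_eq_diagonal]

theorem Rot_mul_Rot (α β : ℝ) : Rot α * Rot β = Rot (α + β) := by
  ext i j; fin_cases i <;> fin_cases j <;> simp [Rot, cos_add, sin_add] <;> ring

theorem Rot_zero : Rot 0 = 1 := by
  ext i j; fin_cases i <;> fin_cases j <;> simp [Rot]

theorem det_Rot (τ : ℝ) : (Rot τ).det = 1 := by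
  simp [Rot, det_fin_two_of, ← sq]

theorem Rot_mul_Tm_inv_mul_Tm_mul_Rot_neg {θ : ℝ} (hθ : cos θ ≠ 0) (φ : ℝ) :
    Rot φ * (Tm θ)⁻¹ * (Tm θ * Rot (-φ)) = 1 := by
  have hT : IsUnit (Tm θ).det := by rw [det_Tm]; exact hθ.isUnit
  rw [Matrix.mul_assoc, ← Matrix.mul_assoc (Tm θ)⁻¹, nonsing_inv_mul _ hT, Matrix.one_mul,
    Rot_mul_Rot, add_neg_cancel, Rot_zero]

theorem Tm_inv_mul_Rot_transpose_mul_eq_conj (θ φ : ℝ) (D : Matrix (Fin 2) (Fin 2) ℝ) :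
    (Tm θ)⁻¹ * (Rot φ)ᵀ * D * Rot φ * (Tm θ)⁻¹
      = (Rot φ * (Tm θ)⁻¹)ᵀ * D * (Rot φ * (Tm θ)⁻¹) := by
  rw [transpose_mul, transpose_nonsing_inv, Tm_transpose]
  simp only [Matrix.mul_assoc]

theorem smul_Tm_sq_eq_diagonal (θ c : ℝ) :
    c • Tm θ ^ 2 = diagonal ![c * cos θ ^ 2, c] := by
  rw [Tm_eq_diagonal, diagonal_pow, ← diagonal_smul]
  congr 1; ext i; fin_cases i <;> simp

theorem posDef_smul_Tm_sq {θ c : ℝ} (hθ : cos θ ≠ 0) (hc : 0 < c) : (c • Tm θ ^ 2).PosDef := by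
  rw [smul_Tm_sq_eq_diagonal, posDef_diagonal_iff, Fin.forall_fin_two]
  exact ⟨by simp only [cons_val_zero]; positivity,
    by simpa only [cons_val_one, cons_val_fin_one] using hc⟩

theorem det_smul_Tm_sq (θ c : ℝ) : (c • Tm θ ^ 2).det = c ^ 2 * cos θ ^ 2 := by
  rw [smul_Tm_sq_eq_diagonal, det_diagonal, Fin.prod_univ_two]
  simp only [cons_val_zero, cons_val_one, cons_val_fin_one]
  ring

theorem det_Rot_mul_Tm_inv (θ φ : ℝ) : (Rot φ * (Tm θ)⁻¹).det = (cos θ)⁻¹ := by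
  rw [det_mul, det_Rot, one_mul, det_nonsing_inv, det_Tm, Ring.inverse_eq_inv']

/-- Corollary 3: the matrix `A = T_{θ̂}⁻¹ R_{φ̂}ᵀ ((1/w²) T_{θᵢ}²) R_{φ̂} T_{θ̂}⁻¹` is symmetric
positive definite with `det A = cos²θᵢ/(w⁴ cos²θ̂)`, and for any eigendecomposition
`A = Qᵀ diag(λ₁,λ₂) Q` with `Q` orthogonal and `λ₁, λ₂ > 0`, the general astigmatic Gaussian
beam with incidence `(θ̂, φ̂)`, widths `1/√λᵢ` and rotation `Q` creates the same power density
on the surface as the original Gaussian beam with incidence elevation `θᵢ`. -/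
theorem astigmatic_equivalence_3D (θi θh φh w : ℝ)
    (hθi : θi ∈ Set.Ico 0 (π / 2)) (hθh : θh ∈ Set.Ico 0 (π / 2)) (hw : 0 < w) :
    ((Tm θh)⁻¹ * (Rot φh)ᵀ * ((1 / w ^ 2) • (Tm θi ^ 2)) * Rot φh * (Tm θh)⁻¹).IsSymm ∧
    ((Tm θh)⁻¹ * (Rot φh)ᵀ * ((1 / w ^ 2) • (Tm θi ^ 2)) * Rot φh * (Tm θh)⁻¹).PosDef ∧
    ((Tm θh)⁻¹ * (Rot φh)ᵀ * ((1 / w ^ 2) • (Tm θi ^ 2)) * Rot φh * (Tm θh)⁻¹).det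
      = Real.cos θi ^ 2 / (w ^ 4 * Real.cos θh ^ 2) ∧
    ∀ (Q : Matrix (Fin 2) (Fin 2) ℝ), Qᵀ * Q = 1 →
      ∀ lam₁ lam₂ : ℝ, 0 < lam₁ → 0 < lam₂ →
        (Tm θh)⁻¹ * (Rot φh)ᵀ * ((1 / w ^ 2) • (Tm θi ^ 2)) * Rot φh * (Tm θh)⁻¹
          = Qᵀ * Matrix.diagonal ![lam₁, lam₂] * Q →
        ∀ a : Fin 2 → ℝ,
          Real.cos θh * Real.sqrt (lam₁ * lam₂) *
            Real.exp (-2 * dotProduct ((Tm θh * Rot (-φh)).mulVec a)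
              ((Qᵀ * Matrix.diagonal ![lam₁, lam₂] * Q).mulVec
                ((Tm θh * Rot (-φh)).mulVec a)))
          = (Real.cos θi / w ^ 2) *
              Real.exp (-(2 / w ^ 2) * dotProduct a ((Tm θi ^ 2).mulVec a)) := by
  have hci : 0 < cos θi := cos_pos_of_mem_Ioo ⟨by linarith [hθi.1, pi_pos], hθi.2⟩
  have hch : 0 < cos θh := cos_pos_of_mem_Ioo ⟨by linarith [hθh.1, pi_pos], hθh.2⟩
  set S := Rot φh * (Tm θh)⁻¹
  set B := Tm θh * Rot (-φh)
  set D := (1 / w ^ 2) • Tm θi ^ 2 with hD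
  have hSB : S * B = 1 := Rot_mul_Tm_inv_mul_Tm_mul_Rot_neg hch.ne' φh
  have hBS : B * S = 1 := mul_eq_one_comm.mp hSB
  have hS : Function.Injective (S *ᵥ ·) :=
    Function.LeftInverse.injective (g := (B *ᵥ ·)) fun x ↦ by
      simp only [mulVec_mulVec, hBS, one_mulVec]
  have hpos : (Sᵀ * D * S).PosDef := by
    rw [← conjTranspose_eq_transpose_of_trivial]
    exact (posDef_smul_Tm_sq hci.ne' (by positivity)).conjTranspose_mul_mul_same hS
  have hdet : (Sᵀ * D * S).det = cos θi ^ 2 / (w ^ 4 * cos θh ^ 2) := by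
    rw [det_mul, det_mul, det_transpose, det_Rot_mul_Tm_inv, det_smul_Tm_sq]
    field_simp
  rw [Tm_inv_mul_Rot_transpose_mul_eq_conj]
  refine ⟨isHermitian_iff_isSymm.mp hpos.isHermitian, hpos, hdet, ?_⟩
  intro Q hQ lam₁ lam₂ _ _ hdec a
  have hsqrt : √(lam₁ * lam₂) = cos θi / (w ^ 2 * cos θh) := by
    have hprod : lam₁ * lam₂ = (Qᵀ * diagonal ![lam₁, lam₂] * Q).det := by
      simp [det_transpose_mul_diagonal_mul hQ]
    rw [hprod, ← hdec, hdet,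
      show cos θi ^ 2 / (w ^ 4 * cos θh ^ 2) = (cos θi / (w ^ 2 * cos θh)) ^ 2 by ring,
      sqrt_sq (by positivity)]
  rw [← hdec, dotProduct_mulVec_conj, transpose_conj_cancel_of_mul_eq_one hSB, hsqrt, hD,
    smul_mulVec, dotProduct_smul, smul_eq_mul]
  field_simp
end

section
/- Let θ_i, θ_r, θ_rl ∈ [0, π/2), φ_r ∈ ℝ and σ_s, σ_r, σ_l > 0. Let ε_s and ε_l be random vectors in ℝ² whose two coordinates are independent with laws N(0, σ_s²) and N(0, σ_l²), respectively, let ε_r be a real random variable with law N(0, σ_r²), and assume ε_s, ε_r, ε_l mutually independent. Set v := (tan θ_r·cos φ_r − tan θ_i, tan θ_r·sin φ_r)ᵀ and define the misalignment vector u := T_{θ_rl}^{-1}·( T_{θ_r} R_{−φ_r} T_{θ_i}^{-1} ε_s − T_{θ_r} R_{−φ_r} v · ε_r − ε_l ). Then E[u] = 0 and the covariance matrix is E[u·uᵀ] = Σ := T_{θ_rl}^{-1}·( σ_s²·T_{θ_r} R_{−φ_r} T_{θ_i}^{-1} T_{θ_i}^{-T} R_{−φ_r}ᵀ T_{θ_r}ᵀ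 + σ_r²·T_{θ_r} R_{−φ_r} v vᵀ R_{−φ_r}ᵀ T_{θ_r}ᵀ + σ_l²·I₂ )·T_{θ_rl}^{-T}. -/
/-!
The misalignment vector is a fixed linear image `u = C ε` of the five independent centred
Gaussian coordinates `ε = (ε_s, ε_r, ε_l)`, with `C = T_{θ_rl}⁻¹ [A | -c | -I₂]`. Independent
square-integrable coordinates are uncorrelated, so `E[u] = C E[ε] = 0` and
`E[u uᵀ] = cov(u) = C diag(Var ε) Cᵀ`; multiplying out the blocks gives `Σ`.
-/

open Real Matrix MeasureTheory ProbabilityTheory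

section Moments

variable {Ω : Type*} [MeasurableSpace Ω] {P : Measure Ω}

lemma hasLaw_of_map_eq {𝓧 : Type*} [MeasurableSpace 𝓧] {μ : Measure 𝓧} [NeZero μ] {X : Ω → 𝓧}
    (h : P.map X = μ) : HasLaw X μ P :=
  ⟨.of_map_ne_zero (h ▸ NeZero.ne μ), h⟩

variable {ι n : Type*} [Fintype ι] {X : ι → Ω → ℝ}

lemma integral_mulVec_apply (C : Matrix n ι ℝ) (hX : ∀ k, Integrable (X k) P) (i : n) :
    ∫ ω, (C *ᵥ fun k ↦ X k ω) i ∂P = (C *ᵥ fun k ↦ ∫ ω, X k ω ∂P) i := by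
  simp only [mulVec, dotProduct]
  rw [integral_finsetSum _ fun k _ ↦ (hX k).const_mul _]
  simp [integral_const_mul]

lemma integral_mulVec_apply_eq_zero (C : Matrix n ι ℝ) (hX : ∀ k, Integrable (X k) P)
    (hmean : ∀ k, ∫ ω, X k ω ∂P = 0) (i : n) : ∫ ω, (C *ᵥ fun k ↦ X k ω) i ∂P = 0 := by
  rw [integral_mulVec_apply C hX]
  simp [hmean, mulVec]

variable [IsProbabilityMeasure P] [DecidableEq ι]

lemma covariance_mulVec_of_iIndepFun (hind : iIndepFun X P) (hX : ∀ k, MemLp (X k) 2 P)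
    (C : Matrix n ι ℝ) (i j : n) :
    cov[fun ω ↦ (C *ᵥ fun k ↦ X k ω) i, fun ω ↦ (C *ᵥ fun k ↦ X k ω) j; P]
      = (C * diagonal (fun k ↦ Var[X k; P]) * Cᵀ) i j := by
  have hcov (k l : ι) : cov[X k, X l; P] = if k = l then Var[X k; P] else 0 := by
    split_ifs with hkl
    · exact hkl ▸ covariance_self (hX k).aestronglyMeasurable.aemeasurable
    · exact (hind.indepFun hkl).covariance_eq_zero (hX k) (hX l)
  simp only [mulVec, dotProduct]
  rw [covariance_fun_sum_fun_sum (fun k ↦ (hX k).const_mul (C i k))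
    (fun k ↦ (hX k).const_mul (C j k))]
  simp only [covariance_const_mul_left, covariance_const_mul_right, hcov, mul_ite, mul_zero,
    Finset.sum_ite_eq, Finset.mem_univ, if_true]
  rw [mul_apply]
  simp only [mul_diagonal, transpose_apply]
  exact Finset.sum_congr rfl fun k _ ↦ by ring

lemma integral_mulVec_mul_mulVec_of_iIndepFun (hind : iIndepFun X P)
    (hX : ∀ k, MemLp (X k) 2 P) (hmean : ∀ k, ∫ ω, X k ω ∂P = 0) (C : Matrix n ι ℝ) (i j : n) :
    ∫ ω, (C *ᵥ fun k ↦ X k ω) i * (C *ᵥ fun k ↦ X k ω) j ∂P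
      = (C * diagonal (fun k ↦ Var[X k; P]) * Cᵀ) i j := by
  rw [← covariance_mulVec_of_iIndepFun hind hX]
  simp [covariance, integral_mulVec_apply_eq_zero C (fun k ↦ (hX k).integrable one_le_two) hmean]

end Moments

lemma mul_vecMulVec_mul_transpose {m n : Type*} [Fintype n] (B : Matrix m n ℝ) (v : n → ℝ) :
    B * vecMulVec v v * Bᵀ = vecMulVec (B *ᵥ v) (B *ᵥ v) := by
  rw [mul_vecMulVec, vecMulVec_mul, vecMul_transpose]

/-- The block matrix `[A | -c | -I₂]`, acting on the noise vector `(ε_s, ε_r, ε_l) ∈ ℝ⁵`. -/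
def noiseMatrix (A : Matrix (Fin 2) (Fin 2) ℝ) (c : Fin 2 → ℝ) : Matrix (Fin 2) (Fin 5) ℝ :=
  !![A 0 0, A 0 1, -c 0, -1, 0; A 1 0, A 1 1, -c 1, 0, -1]

lemma noiseMatrix_mulVec (A : Matrix (Fin 2) (Fin 2) ℝ) (c : Fin 2 → ℝ) (a b r d e : ℝ) :
    noiseMatrix A c *ᵥ ![a, b, r, d, e] = A *ᵥ ![a, b] - r • c - ![d, e] := by
  ext i
  fin_cases i <;>
    simp [noiseMatrix, mulVec, dotProduct, Fin.sum_univ_five, vecHead, vecTail] <;> ring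

lemma noiseMatrix_mul_diagonal_mul_transpose (A : Matrix (Fin 2) (Fin 2) ℝ) (c : Fin 2 → ℝ)
    (p q r : ℝ) :
    noiseMatrix A c * diagonal ![p, p, q, r, r] * (noiseMatrix A c)ᵀ
      = p • (A * Aᵀ) + q • vecMulVec c c + r • 1 := by
  ext i j
  fin_cases i <;> fin_cases j <;>
    simp [noiseMatrix, mul_apply, Fin.sum_univ_five, vecMulVec_apply, -cons_mul] <;> ring

lemma mul_noiseMatrix_mul_diagonal_mul_transpose (S A : Matrix (Fin 2) (Fin 2) ℝ)
    (c : Fin 2 → ℝ) (p q r : ℝ) :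
    S * noiseMatrix A c * diagonal ![p, p, q, r, r] * (S * noiseMatrix A c)ᵀ
      = S * (p • (A * Aᵀ) + q • vecMulVec c c + r • 1) * Sᵀ := by
  rw [transpose_mul, ← noiseMatrix_mul_diagonal_mul_transpose]
  simp only [Matrix.mul_assoc]

theorem misalignment_mean_cov_3D_general {Ω : Type*} [MeasurableSpace Ω]
    (P : Measure Ω) [IsProbabilityMeasure P]
    (θi θr θrl φr σs σr σl : ℝ)
    (εsx εsy εr εlx εly : Ω → ℝ)
    (hlawsx : Measure.map εsx P = gaussianReal 0 (σs ^ 2).toNNReal)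
    (hlawsy : Measure.map εsy P = gaussianReal 0 (σs ^ 2).toNNReal)
    (hlawr : Measure.map εr P = gaussianReal 0 (σr ^ 2).toNNReal)
    (hlawlx : Measure.map εlx P = gaussianReal 0 (σl ^ 2).toNNReal)
    (hlawly : Measure.map εly P = gaussianReal 0 (σl ^ 2).toNNReal)
    (hindep : iIndepFun ![εsx, εsy, εr, εlx, εly] P)
    (v : Fin 2 → ℝ)
    (u : Ω → Fin 2 → ℝ)
    (hu : u = fun ω => (Tm θrl)⁻¹.mulVec
        ((Tm θr * Rot (-φr) * (Tm θi)⁻¹).mulVec ![εsx ω, εsy ω]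
          - εr ω • ((Tm θr * Rot (-φr)).mulVec v) - ![εlx ω, εly ω])) :
    (∀ i : Fin 2, ∫ ω, u ω i ∂P = 0) ∧
    (∀ i j : Fin 2, ∫ ω, u ω i * u ω j ∂P =
      ((Tm θrl)⁻¹ *
        (σs ^ 2 • (Tm θr * Rot (-φr) * (Tm θi)⁻¹ * ((Tm θi)⁻¹)ᵀ * (Rot (-φr))ᵀ * (Tm θr)ᵀ)
          + σr ^ 2 • (Tm θr * Rot (-φr) * vecMulVec v v * (Rot (-φr))ᵀ * (Tm θr)ᵀ)
          + σl ^ 2 • (1 : Matrix (Fin 2) (Fin 2) ℝ)) * ((Tm θrl)⁻¹)ᵀ) i j) := by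
  set X : Fin 5 → Ω → ℝ := ![εsx, εsy, εr, εlx, εly]
  set W : Fin 5 → ℝ := ![σs ^ 2, σs ^ 2, σr ^ 2, σl ^ 2, σl ^ 2]
  have hlaw (k : Fin 5) : HasLaw (X k) (gaussianReal 0 (W k).toNNReal) P := by
    fin_cases k <;> exact hasLaw_of_map_eq ‹_›
  have hL2 (k : Fin 5) : MemLp (X k) 2 P := (hlaw k).hasGaussianLaw.memLp_two
  have hmean (k : Fin 5) : ∫ ω, X k ω ∂P = 0 :=
    (hlaw k).integral_eq.trans integral_id_gaussianReal
  have hvar : (fun k ↦ Var[X k; P]) = W := funext fun k ↦ by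
    rw [(hlaw k).variance_eq, variance_id_gaussianReal,
      Real.coe_toNNReal _ (by fin_cases k <;> exact sq_nonneg _)]
  set B := Tm θr * Rot (-φr)
  set A := B * (Tm θi)⁻¹
  set M := noiseMatrix A (B *ᵥ v)
  have hu' : u = fun ω ↦ ((Tm θrl)⁻¹ * M) *ᵥ fun k ↦ X k ω := by
    funext ω
    have hXω : (fun k ↦ X k ω) = ![εsx ω, εsy ω, εr ω, εlx ω, εly ω] := by
      funext k; fin_cases k <;> rfl
    rw [hXω, ← mulVec_mulVec _ (Tm θrl)⁻¹, noiseMatrix_mulVec, hu]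
  refine ⟨fun i ↦ ?_, fun i j ↦ ?_⟩
  · rw [hu']
    exact integral_mulVec_apply_eq_zero _ (fun k ↦ (hL2 k).integrable one_le_two) hmean i
  · rw [hu', integral_mulVec_mul_mulVec_of_iIndepFun hindep hL2 hmean, hvar,
      mul_noiseMatrix_mul_diagonal_mul_transpose, ← mul_vecMulVec_mul_transpose]
    simp only [A, B, transpose_mul, Matrix.mul_assoc]

/-- Lemma 5 + Eq. (31): the 3D misalignment vector
`u = T_{θ_rl}⁻¹ (T_{θ_r} R_{−φ_r} T_{θ_i}⁻¹ ε_s − T_{θ_r} R_{−φ_r} v ε_r − ε_l)`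
has zero mean and covariance matrix
`Σ = T_{θ_rl}⁻¹ (σ_s² T_{θ_r} R_{−φ_r} T_{θ_i}⁻¹ T_{θ_i}⁻ᵀ R_{−φ_r}ᵀ T_{θ_r}ᵀ
  + σ_r² T_{θ_r} R_{−φ_r} v vᵀ R_{−φ_r}ᵀ T_{θ_r}ᵀ + σ_l² I₂) T_{θ_rl}⁻ᵀ`. -/
theorem misalignment_mean_cov_3D {Ω : Type*} [MeasurableSpace Ω]
    (P : Measure Ω) [IsProbabilityMeasure P]
    (θi θr θrl φr σs σr σl : ℝ)
    (hθi : θi ∈ Set.Ico 0 (π / 2)) (hθr : θr ∈ Set.Ico 0 (π / 2))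
    (hθrl : θrl ∈ Set.Ico 0 (π / 2))
    (hσs : 0 < σs) (hσr : 0 < σr) (hσl : 0 < σl)
    (εsx εsy εr εlx εly : Ω → ℝ)
    (hεsx : Measurable εsx) (hεsy : Measurable εsy) (hεr : Measurable εr)
    (hεlx : Measurable εlx) (hεly : Measurable εly)
    (hlawsx : Measure.map εsx P = gaussianReal 0 (σs ^ 2).toNNReal)
    (hlawsy : Measure.map εsy P = gaussianReal 0 (σs ^ 2).toNNReal)
    (hlawr : Measure.map εr P = gaussianReal 0 (σr ^ 2).toNNReal)
    (hlawlx : Measure.map εlx P = gaussianReal 0 (σl ^ 2).toNNReal)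
    (hlawly : Measure.map εly P = gaussianReal 0 (σl ^ 2).toNNReal)
    (hindep : iIndepFun ![εsx, εsy, εr, εlx, εly] P)
    (v : Fin 2 → ℝ)
    (hv : v = ![Real.tan θr * Real.cos φr - Real.tan θi, Real.tan θr * Real.sin φr])
    (u : Ω → Fin 2 → ℝ)
    (hu : u = fun ω => (Tm θrl)⁻¹.mulVec
        ((Tm θr * Rot (-φr) * (Tm θi)⁻¹).mulVec ![εsx ω, εsy ω]
          - εr ω • ((Tm θr * Rot (-φr)).mulVec v) - ![εlx ω, εly ω])) :
    (∀ i : Fin 2, ∫ ω, u ω i ∂P = 0) ∧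
    (∀ i j : Fin 2, ∫ ω, u ω i * u ω j ∂P =
      ((Tm θrl)⁻¹ *
        (σs ^ 2 • (Tm θr * Rot (-φr) * (Tm θi)⁻¹ * ((Tm θi)⁻¹)ᵀ * (Rot (-φr))ᵀ * (Tm θr)ᵀ)
          + σr ^ 2 • (Tm θr * Rot (-φr) * vecMulVec v v * (Rot (-φr))ᵀ * (Tm θr)ᵀ)
          + σl ^ 2 • (1 : Matrix (Fin 2) (Fin 2) ℝ)) * ((Tm θrl)⁻¹)ᵀ) i j) :=
  misalignment_mean_cov_3D_general P θi θr θrl φr σs σr σl εsx εsy εr εlx εly hlawsx hlawsy hlawr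
    hlawlx hlawly hindep v u hu
end

section
/- Let χ₁ ≥ χ₂ > 0, let U₁, U₂ be independent real random variables with laws N(0, χ₁) and N(0, χ₂), set q := √(χ₂/χ₁) and Ω := χ₁ + χ₂, let A₀ > 0 and t > 0, and define h_g := A₀·exp(−2(U₁² + U₂²)/t). Set ϖ := (1+q²)·t/(4q·Ω). Then the law of h_g is absolutely continuous with respect to Lebesgue measure with density f(x) = (ϖ/A₀)·(x/A₀)^{((1+q²)ϖ/(2q)) − 1} · I₀( −((1−q²)ϖ/(2q))·ln(x/A₀) ) for 0 < x ≤ A₀, and f(x) = 0 otherwise. -/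
open Real MeasureTheory ProbabilityTheory

/-- Modified Bessel function of the first kind of order zero:
`I₀(x) = (1/π) ∫₀^π exp(x cos τ) dτ`. -/
noncomputable def besselI0 (x : ℝ) : ℝ :=
  (1 / π) * ∫ τ in (0:ℝ)..π, Real.exp (x * Real.cos τ)

/-!
In polar coordinates the product density of `(U₁, U₂)` splits as `e^{-a r²} · e^{b r² cos 2θ}` with
`a = (χ₁ + χ₂)/(4χ₁χ₂)` and `b = (χ₁ - χ₂)/(4χ₁χ₂)`; integrating out `θ` yields `2π I₀(b r²)`, so
`S = U₁² + U₂²` has density `e^{-a s} I₀(b s) / (2√(χ₁χ₂))` on `(0, ∞)`. The GML is the decreasing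
image `A₀ e^{-2S/t}` of `S`, and the one-dimensional change of variables turns `e^{-a s}` into the
power of `x/A₀` and `I₀(b s)` into `I₀(-((1-q²)ϖ/(2q)) ln(x/A₀))`.
-/

open Set
open scoped ENNReal NNReal

theorem integral_exp_mul_cos_eq_two_pi_mul_besselI0 (k : ℝ) :
    ∫ u in (-π)..π, exp (k * cos u) = 2 * π * besselI0 k := by
  have hcont : Continuous fun u => exp (k * cos u) := by fun_prop
  have heven : ∫ u in (-π)..0, exp (k * cos u) = ∫ u in (0 : ℝ)..π, exp (k * cos u) := by
    simpa [cos_neg] using (intervalIntegral.integral_comp_neg (a := 0) (b := π)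
      fun u => exp (k * cos u)).symm
  rw [← intervalIntegral.integral_add_adjacent_intervals (b := 0) (hcont.intervalIntegrable _ _)
    (hcont.intervalIntegrable _ _), heven, besselI0]
  field_simp
  ring

theorem integral_exp_mul_cos_two_mul (k : ℝ) :
    ∫ θ in (-π)..π, exp (k * cos (2 * θ)) = ∫ u in (-π)..π, exp (k * cos u) := by
  have hper : Function.Periodic (fun u => exp (k * cos u)) (2 * π) := fun u => by
    simp [cos_add_two_pi]
  have hcont : Continuous fun u => exp (k * cos u) := by fun_prop
  have hfull : ∫ u in -(2 * π)..2 * π, exp (k * cos u)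
      = 2 * ∫ u in -(2 * π)..0, exp (k * cos u) := by
    have := hper.intervalIntegral_add_zsmul_eq 2 (-(2 * π)) fun _ _ =>
      hcont.intervalIntegrable _ _
    rwa [show -(2 * π) + (2 : ℤ) • (2 * π) = 2 * π by simp; ring,
      show -(2 * π) + 2 * π = 0 by ring, zsmul_eq_mul, Int.cast_ofNat] at this
  have hshift : ∫ u in -(2 * π)..0, exp (k * cos u) = ∫ u in (-π)..π, exp (k * cos u) := by
    have := hper.intervalIntegral_add_eq (-(2 * π)) (-π)
    rwa [show -(2 * π) + 2 * π = 0 by ring, show -π + 2 * π = π by ring] at this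
  rw [intervalIntegral.integral_comp_mul_left (fun u => exp (k * cos u)) two_ne_zero, mul_neg,
    hfull, hshift, smul_eq_mul, inv_mul_cancel_left₀ two_ne_zero]

theorem lintegral_ofReal_exp_mul_cos_two_mul (k : ℝ) :
    ∫⁻ θ in Ioo (-π) π, ENNReal.ofReal (exp (k * cos (2 * θ))) =
      ENNReal.ofReal (2 * π * besselI0 k) := by
  have hcont : Continuous fun θ => exp (k * cos (2 * θ)) := by fun_prop
  rw [← ofReal_integral_eq_lintegral_ofReal (hcont.integrableOn_Icc.mono_set Ioo_subset_Icc_self)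
    (.of_forall fun θ => (exp_pos _).le), ← integral_Ioc_eq_integral_Ioo,
    ← intervalIntegral.integral_of_le (by linarith [pi_pos]), integral_exp_mul_cos_two_mul,
    integral_exp_mul_cos_eq_two_pi_mul_besselI0]

theorem map_restrict_withDensity_eq_of_hasDerivWithinAt {s : Set ℝ} {φ φ' : ℝ → ℝ}
    {f g : ℝ → ℝ≥0∞} (hs : MeasurableSet s) (hφ : Measurable φ)
    (hφ' : ∀ x ∈ s, HasDerivWithinAt φ (φ' x) s x) (hinj : InjOn φ s)
    (hfg : ∀ x ∈ s, ENNReal.ofReal |φ' x| * g (φ x) = f x) :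
    ((volume.restrict s).withDensity f).map φ = (volume.restrict (φ '' s)).withDensity g := by
  ext B hB
  have hsB : MeasurableSet (φ ⁻¹' B ∩ s) := (hφ hB).inter hs
  rw [Measure.map_apply hφ hB, withDensity_apply _ (hφ hB), withDensity_apply _ hB,
    Measure.restrict_restrict (hφ hB), Measure.restrict_restrict hB, ← image_preimage_inter,
    lintegral_image_eq_lintegral_abs_deriv_mul hsB
      (fun x hx => (hφ' x hx.2).mono inter_subset_right) (hinj.mono inter_subset_right)]
  exact setLIntegral_congr_fun hsB fun x hx => (hfg x hx.2).symm

theorem gaussianReal_prod_gaussianReal_eq_withDensity (μ₁ μ₂ : ℝ) {v₁ v₂ : ℝ≥0}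
    (hv₁ : v₁ ≠ 0) (hv₂ : v₂ ≠ 0) :
    (gaussianReal μ₁ v₁).prod (gaussianReal μ₂ v₂) =
      volume.withDensity fun p => gaussianPDF μ₁ v₁ p.1 * gaussianPDF μ₂ v₂ p.2 := by
  rw [gaussianReal_of_var_ne_zero _ hv₁, gaussianReal_of_var_ne_zero _ hv₂,
    prod_withDensity (measurable_gaussianPDF _ _) (measurable_gaussianPDF _ _),
    Measure.volume_eq_prod]

theorem lintegral_eq_lintegral_polar {F : ℝ × ℝ → ℝ≥0∞} (hF : Measurable F) :
    ∫⁻ p, F p = ∫⁻ r in Ioi 0, ∫⁻ θ in Ioo (-π) π,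
      ENNReal.ofReal r * F (r * cos θ, r * sin θ) := by
  rw [← lintegral_comp_polarCoord_symm, polarCoord_target, Measure.volume_eq_prod,
    ← Measure.prod_restrict]
  simp only [polarCoord_symm_apply, smul_eq_mul]
  exact lintegral_prod _ (by fun_prop)

theorem map_sq_add_sq_withDensity {F : ℝ × ℝ → ℝ≥0∞} (hF : Measurable F) :
    (volume.withDensity F).map (fun p => p.1 ^ 2 + p.2 ^ 2) =
      ((volume.restrict (Ioi 0)).withDensity fun r =>
        ENNReal.ofReal r * ∫⁻ θ in Ioo (-π) π, F (r * cos θ, r * sin θ)).map (· ^ 2) := by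
  have hsq : ∀ r θ : ℝ, (r * cos θ) ^ 2 + (r * sin θ) ^ 2 = r ^ 2 := fun r θ => by
    linear_combination r ^ 2 * sin_sq_add_cos_sq θ
  ext B hB
  have hpre : MeasurableSet ((fun p : ℝ × ℝ => p.1 ^ 2 + p.2 ^ 2) ⁻¹' B) :=
    (by fun_prop : Measurable fun p : ℝ × ℝ => p.1 ^ 2 + p.2 ^ 2) hB
  have hpre' : MeasurableSet ((· ^ 2 : ℝ → ℝ) ⁻¹' B) := (measurable_id.pow_const 2) hB
  rw [Measure.map_apply (by fun_prop) hB, Measure.map_apply (by fun_prop) hB,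
    withDensity_apply _ hpre, withDensity_apply _ hpre',
    ← lintegral_indicator hpre, lintegral_eq_lintegral_polar (hF.indicator hpre),
    ← lintegral_indicator hpre']
  refine setLIntegral_congr_fun measurableSet_Ioi fun r _ => ?_
  by_cases hr : r ^ 2 ∈ B <;> simp [hsq, hr, lintegral_const_mul' _ _ ENNReal.ofReal_ne_top]

theorem gaussianPDFReal_mul_gaussianPDFReal_polar {v₁ v₂ : ℝ≥0} (hv₁ : v₁ ≠ 0) (hv₂ : v₂ ≠ 0)
    (r θ : ℝ) :
    gaussianPDFReal 0 v₁ (r * cos θ) * gaussianPDFReal 0 v₂ (r * sin θ) =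
      (2 * π * √(v₁ * v₂))⁻¹ * exp (-((v₁ + v₂) / (4 * v₁ * v₂) * r ^ 2)) *
        exp ((v₁ - v₂) / (4 * v₁ * v₂) * r ^ 2 * cos (2 * θ)) := by
  have hv₁' : (v₁ : ℝ) ≠ 0 := by exact_mod_cast hv₁
  have hv₂' : (v₂ : ℝ) ≠ 0 := by exact_mod_cast hv₂
  have hnorm : √(2 * π * v₁) * √(2 * π * v₂) = 2 * π * √(v₁ * v₂) := by
    rw [← sqrt_mul (by positivity), show 2 * π * v₁ * (2 * π * v₂) = (2 * π) ^ 2 * (v₁ * v₂) by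
      ring, sqrt_mul (by positivity), sqrt_sq (by positivity)]
  have hexp : -(r * cos θ - 0) ^ 2 / (2 * v₁) + -(r * sin θ - 0) ^ 2 / (2 * v₂) =
      -((v₁ + v₂) / (4 * v₁ * v₂) * r ^ 2) + (v₁ - v₂) / (4 * v₁ * v₂) * r ^ 2 * cos (2 * θ) := by
    rw [sub_zero, sub_zero, mul_pow, mul_pow, sin_sq, cos_two_mul]
    field_simp
    ring
  rw [gaussianPDFReal, gaussianPDFReal, mul_mul_mul_comm, ← mul_inv, hnorm, ← exp_add, hexp,
    exp_add]
  ring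

theorem map_sq_add_sq_gaussianReal_prod {v₁ v₂ : ℝ≥0} (hv₁ : v₁ ≠ 0) (hv₂ : v₂ ≠ 0) :
    ((gaussianReal 0 v₁).prod (gaussianReal 0 v₂)).map (fun p => p.1 ^ 2 + p.2 ^ 2) =
      (volume.restrict (Ioi 0)).withDensity fun s => ENNReal.ofReal
        ((2 * √(v₁ * v₂))⁻¹ * exp (-((v₁ + v₂) / (4 * v₁ * v₂) * s)) *
          besselI0 ((v₁ - v₂) / (4 * v₁ * v₂) * s)) := by
  have himage : (· ^ 2 : ℝ → ℝ) '' Ioi 0 = Ioi 0 := by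
    ext s
    refine ⟨?_, fun hs => ⟨√s, sqrt_pos.2 hs, sq_sqrt hs.le⟩⟩
    rintro ⟨r, hr, rfl⟩
    exact pow_pos (mem_Ioi.1 hr) 2
  have hF : Measurable fun p : ℝ × ℝ => gaussianPDF 0 v₁ p.1 * gaussianPDF 0 v₂ p.2 :=
    ((measurable_gaussianPDF _ _).comp measurable_fst).mul
      ((measurable_gaussianPDF _ _).comp measurable_snd)
  rw [gaussianReal_prod_gaussianReal_eq_withDensity _ _ hv₁ hv₂, map_sq_add_sq_withDensity hF]
  conv_rhs => rw [← himage]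
  refine map_restrict_withDensity_eq_of_hasDerivWithinAt (φ' := fun r => 2 * r)
    measurableSet_Ioi (measurable_id.pow_const 2)
    (fun r _ => by simpa using (hasDerivAt_pow 2 r).hasDerivWithinAt)
    ((pow_left_strictMonoOn₀ two_ne_zero).injOn.mono fun r hr => le_of_lt hr) fun r hr => ?_
  have hr : 0 < r := hr
  simp only [gaussianPDF, ← ENNReal.ofReal_mul (gaussianPDFReal_nonneg _ _ _),
    gaussianPDFReal_mul_gaussianPDFReal_polar hv₁ hv₂]
  rw [lintegral_congr fun θ => ENNReal.ofReal_mul (by positivity), lintegral_const_mul' _ _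
    ENNReal.ofReal_ne_top, lintegral_ofReal_exp_mul_cos_two_mul, ← ENNReal.ofReal_mul
    (by positivity), ← ENNReal.ofReal_mul (by positivity), ← ENNReal.ofReal_mul hr.le]
  congr 1
  rw [abs_of_pos (by positivity)]
  field_simp

theorem image_mul_exp_Ioi {A₀ t : ℝ} (hA₀ : 0 < A₀) (ht : 0 < t) :
    (fun s => A₀ * exp (-2 * s / t)) '' Ioi 0 = Ioo 0 A₀ := by
  ext x
  constructor
  · rintro ⟨s, hs, rfl⟩
    have hs : 0 < s := hs
    exact ⟨by positivity,
      mul_lt_of_lt_one_right hA₀ (exp_lt_one_iff.2 (div_neg_of_neg_of_pos (by linarith) ht))⟩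
  · rintro ⟨hx, hxA⟩
    refine ⟨t / 2 * log (A₀ / x), mul_pos (by positivity) (log_pos ((one_lt_div hx).2 hxA)), ?_⟩
    show A₀ * exp (-2 * (t / 2 * log (A₀ / x)) / t) = x
    rw [show -2 * (t / 2 * log (A₀ / x)) / t = log (x / A₀) by
      rw [log_div hx.ne' hA₀.ne', log_div hA₀.ne' hx.ne']; field_simp; ring,
      exp_log (div_pos hx hA₀), mul_div_cancel₀ _ hA₀.ne']

theorem map_mul_exp_withDensity {A₀ t ϖ κ ν : ℝ} (hA₀ : 0 < A₀) (ht : 0 < t) :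
    ((volume.restrict (Ioi 0)).withDensity fun s => ENNReal.ofReal
        (2 * ϖ / t * exp (-(2 * κ / t * s)) * besselI0 (2 * ν / t * s))).map
      (fun s => A₀ * exp (-2 * s / t)) =
    volume.withDensity fun x => ENNReal.ofReal (if 0 < x ∧ x ≤ A₀ then
        ϖ / A₀ * (x / A₀) ^ (κ - 1) * besselI0 (-ν * log (x / A₀)) else 0) := by
  have hind : (fun x => ENNReal.ofReal (if 0 < x ∧ x ≤ A₀ then
        ϖ / A₀ * (x / A₀) ^ (κ - 1) * besselI0 (-ν * log (x / A₀)) else 0)) =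
      (Ioc 0 A₀).indicator fun x => ENNReal.ofReal
        (ϖ / A₀ * (x / A₀) ^ (κ - 1) * besselI0 (-ν * log (x / A₀))) := by
    ext x
    by_cases hx : 0 < x ∧ x ≤ A₀ <;> simp [hx]
  rw [hind, withDensity_indicator measurableSet_Ioc, Measure.restrict_congr_set Ioo_ae_eq_Ioc.symm,
    ← image_mul_exp_Ioi hA₀ ht]
  refine map_restrict_withDensity_eq_of_hasDerivWithinAt
    (φ' := fun s => A₀ * (exp (-2 * s / t) * (-2 / t))) measurableSet_Ioi (by fun_prop)
    (fun s _ => by simpa using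
      ((((hasDerivAt_id s).const_mul (-2 : ℝ)).div_const t).exp.const_mul A₀).hasDerivWithinAt)
    (fun x _ y _ h => by simpa [hA₀.ne', ht.ne'] using h) fun s _ => ?_
  have hexp : exp (-2 * s / t) * exp (-2 * s / t) ^ (κ - 1) = exp (-(2 * κ / t * s)) := by
    rw [← exp_mul, ← exp_add]
    ring_nf
  rw [← ENNReal.ofReal_mul (abs_nonneg _), mul_div_cancel_left₀ _ hA₀.ne', log_exp,
    abs_mul, abs_mul, abs_of_pos hA₀, abs_of_pos (exp_pos _), abs_div, abs_neg, abs_two,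
    abs_of_pos ht, ← hexp, show -ν * (-2 * s / t) = 2 * ν / t * s by ring]
  congr 1
  field_simp

theorem ProbabilityTheory.IndepFun.map_sq_add_sq_eq_withDensity {Ω : Type*} [MeasurableSpace Ω]
    {P : Measure Ω} [IsFiniteMeasure P] {U₁ U₂ : Ω → ℝ} {v₁ v₂ : ℝ≥0} (hv₁ : v₁ ≠ 0) (hv₂ : v₂ ≠ 0)
    (hU₁ : Measurable U₁) (hU₂ : Measurable U₂) (hlaw₁ : P.map U₁ = gaussianReal 0 v₁)
    (hlaw₂ : P.map U₂ = gaussianReal 0 v₂) (hindep : IndepFun U₁ U₂ P) :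
    P.map (fun ω => U₁ ω ^ 2 + U₂ ω ^ 2) =
      (volume.restrict (Ioi 0)).withDensity fun s => ENNReal.ofReal
        ((2 * √(v₁ * v₂))⁻¹ * exp (-((v₁ + v₂) / (4 * v₁ * v₂) * s)) *
          besselI0 ((v₁ - v₂) / (4 * v₁ * v₂) * s)) := by
  rw [show (fun ω => U₁ ω ^ 2 + U₂ ω ^ 2) =
      (fun p : ℝ × ℝ => p.1 ^ 2 + p.2 ^ 2) ∘ fun ω => (U₁ ω, U₂ ω) from rfl,
    ← Measure.map_map (by fun_prop) (hU₁.prodMk hU₂),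
    hindep.map_prod_eq_prod_map_map hU₁.aemeasurable hU₂.aemeasurable, hlaw₁, hlaw₂,
    map_sq_add_sq_gaussianReal_prod hv₁ hv₂]

/-- Eq. (32): the PDF of the 3D GML `h_g = A₀ exp(−2(U₁² + U₂²)/t)` for a centered bivariate
Gaussian misalignment with independent components of variances `χ₁ ≥ χ₂ > 0`:  with
`q = √(χ₂/χ₁)`, `Ω = χ₁ + χ₂` and `ϖ = (1+q²)t/(4qΩ)`, the density is
`(ϖ/A₀)(x/A₀)^{(1+q²)ϖ/(2q)−1} I₀(−((1−q²)ϖ/(2q)) ln(x/A₀))` on `(0, A₀]` and 0 otherwise. -/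
theorem GML_pdf_3D {α : Type*} [MeasurableSpace α]
    (P : Measure α) [IsProbabilityMeasure P]
    (χ₁ χ₂ : ℝ) (hχ₂ : 0 < χ₂) (hχ : χ₂ ≤ χ₁)
    (U₁ U₂ : α → ℝ) (hU₁ : Measurable U₁) (hU₂ : Measurable U₂)
    (hlaw₁ : Measure.map U₁ P = gaussianReal 0 χ₁.toNNReal)
    (hlaw₂ : Measure.map U₂ P = gaussianReal 0 χ₂.toNNReal)
    (hindep : IndepFun U₁ U₂ P)
    (A₀ t : ℝ) (hA₀ : 0 < A₀) (ht : 0 < t)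
    (q Ωm ϖ : ℝ) (hq : q = Real.sqrt (χ₂ / χ₁)) (hΩ : Ωm = χ₁ + χ₂)
    (hϖ : ϖ = (1 + q ^ 2) * t / (4 * q * Ωm)) :
    Measure.map (fun ω => A₀ * Real.exp (-2 * ((U₁ ω) ^ 2 + (U₂ ω) ^ 2) / t)) P
      = volume.withDensity (fun x => ENNReal.ofReal (
          if 0 < x ∧ x ≤ A₀ then
            (ϖ / A₀) * (x / A₀) ^ ((1 + q ^ 2) * ϖ / (2 * q) - 1) *
              besselI0 (-((1 - q ^ 2) * ϖ / (2 * q)) * Real.log (x / A₀))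
          else 0)) := by
  have hχ₁ : 0 < χ₁ := hχ₂.trans_le hχ
  have hq_pos : 0 < q := hq ▸ sqrt_pos.2 (div_pos hχ₂ hχ₁)
  have hχ₂_eq : χ₂ = q ^ 2 * χ₁ := by
    rw [hq, sq_sqrt (div_pos hχ₂ hχ₁).le, div_mul_cancel₀ _ hχ₁.ne']
  have hϖ_eq : ϖ = t / (4 * q * χ₁) := by
    rw [hϖ, hΩ, hχ₂_eq]
    field_simp
  have hc : 2 * ϖ / t = (2 * √(χ₁ * χ₂))⁻¹ := by
    rw [hϖ_eq, hχ₂_eq, show χ₁ * (q ^ 2 * χ₁) = (q * χ₁) ^ 2 by ring, sqrt_sq (by positivity)]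
    field_simp
    norm_num
  have ha : 2 * ((1 + q ^ 2) * ϖ / (2 * q)) / t = (χ₁ + χ₂) / (4 * χ₁ * χ₂) := by
    rw [hϖ_eq, hχ₂_eq]
    field_simp
  have hb : 2 * ((1 - q ^ 2) * ϖ / (2 * q)) / t = (χ₁ - χ₂) / (4 * χ₁ * χ₂) := by
    rw [hϖ_eq, hχ₂_eq]
    field_simp
  have hS := hindep.map_sq_add_sq_eq_withDensity (by simpa using hχ₁) (by simpa using hχ₂)
    hU₁ hU₂ hlaw₁ hlaw₂
  rw [Real.coe_toNNReal _ hχ₁.le, Real.coe_toNNReal _ hχ₂.le, ← hc, ← ha, ← hb] at hS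
  rw [← map_mul_exp_withDensity hA₀ ht, ← hS, Measure.map_map (by fun_prop) (by fun_prop)]
  rfl
end

section
/- Let y_l > 0 and z_l > 0, let θ_r ∈ (0, π/2) and let θ_rl be such that tan(θ_r − θ_rl) + cot θ_r ≠ 0. Define y_c := (tan(θ_r − θ_rl)·y_l + z_l)/(tan(θ_r − θ_rl) + cot θ_r) and z_c := cot θ_r · y_c. Then (y_c, z_c) = (y_l, z_l) if and only if tan θ_r = y_l/z_l. In particular, the reflection angle that places the center of the reflected beam footprint at the center of the lens is θ_r* with tan θ_r* = y_l/z_l. -/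
/-!
The footprint center is where the reflected ray `z = (cot θ_r) y` meets the lens line, the
line through the lens center with slope `-tan(θ_r - θ_rl)`. It is the lens center exactly when
the lens center lies on the reflected ray, i.e. `cot θ_r · y_l = z_l`, which is
`tan θ_r = y_l / z_l` since `tan θ_r = (cot θ_r)⁻¹`.
-/

open Real

section Field

variable {K : Type*} [Field K]

/-- `((t y + z) / (t + c), c (t y + z) / (t + c))` is the meet of the line `Z = c Y` with the
line through `(y, z)` of slope `-t`. -/
theorem meet_eq_point_iff_mul_eq {t c y z : K} (h : t + c ≠ 0) :
    ((t * y + z) / (t + c) = y ∧ c * ((t * y + z) / (t + c)) = z) ↔ c * y = z := by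
  constructor
  · rintro ⟨hy, hz⟩
    rwa [hy] at hz
  · intro hcy
    have hy : (t * y + z) / (t + c) = y := by
      rw [div_eq_iff h, ← hcy]
      ring
    rw [hy]
    exact ⟨rfl, hcy⟩

theorem inv_eq_div_iff_mul_eq {a y z : K} (hy : y ≠ 0) : a⁻¹ = y / z ↔ a * y = z := by
  rw [inv_eq_iff_eq_inv, inv_div, eq_div_iff hy]

end Field

theorem optimal_reflection_angle_general (y_l z_l θr θrl : ℝ)
    (hy : 0 < y_l)
    (hden : Real.tan (θr - θrl) + Real.cot θr ≠ 0) :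
    ((Real.tan (θr - θrl) * y_l + z_l) / (Real.tan (θr - θrl) + Real.cot θr) = y_l ∧
      Real.cot θr *
        ((Real.tan (θr - θrl) * y_l + z_l) / (Real.tan (θr - θrl) + Real.cot θr)) = z_l)
      ↔ Real.tan θr = y_l / z_l := by
  rw [meet_eq_point_iff_mul_eq hden, ← Real.cot_inv_eq_tan, inv_eq_div_iff_mul_eq hy.ne']

/-- Eq. (15): with footprint center `(y_c, z_c)` on the lens line given by
`y_c = (tan(θ_r − θ_rl) y_l + z_l)/(tan(θ_r − θ_rl) + cot θ_r)` and `z_c = cot θ_r · y_c`,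
the footprint center coincides with the lens center `(y_l, z_l)` iff `tan θ_r = y_l/z_l`. -/
theorem optimal_reflection_angle (y_l z_l θr θrl : ℝ)
    (hy : 0 < y_l) (hz : 0 < z_l) (hθr : θr ∈ Set.Ioo 0 (π / 2))
    (hden : Real.tan (θr - θrl) + Real.cot θr ≠ 0) :
    ((Real.tan (θr - θrl) * y_l + z_l) / (Real.tan (θr - θrl) + Real.cot θr) = y_l ∧
      Real.cot θr *
        ((Real.tan (θr - θrl) * y_l + z_l) / (Real.tan (θr - θrl) + Real.cot θr)) = z_l)
      ↔ Real.tan θr = y_l / z_l :=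
  optimal_reflection_angle_general y_l z_l θr θrl hy hden
end
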